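/- arXiv:2401.16413 — 3 statements merged into one kernel-verified Lean document; each statement's English description precedes it below -/
import Mathlib

section
/- Let H be a complex Hilbert space, b : H × H → ℂ a continuous sesquilinear form with constant M (i.e., |b(v,w)| ≤ M‖v‖‖w‖), and suppose u, u_h ∈ H and ψ, ψ_h ∈ H* satisfy b(u,w) = ⟨ψ,w⟩ for all w ∈ H and, for all w_h in a subspace V_h ⊆ H, b(u_h, w_h) agrees with a sesquilinear form b_h via b_h(u_h, w_h) = ⟨ψ_h, w_h⟩. If |b(v_h,w_h) − b_h(v_h,w_h)| ≤ M·γ_q‖v_h‖‖w_h‖ and |⟨ψ − ψ_h, w_h⟩| ≤ M·γ̃_q‖ψ‖_*‖w_h‖ for all v_h, w_h ∈ V_h, then for all w_h ∈ V_h: |b(u − u_h, w_h)| ≤ M(γ_q‖u − u_h‖ + γ_q‖u‖ + γ̃_q‖ψ‖_*)‖w_h‖. -/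
/-- Quasi Galerkin orthogonality: if `b(u,·) = ψ`, `b_h(u_h,·) = ψ_h` on `V_h`, with
`|b − b_h| ≤ M γ_q` and `|ψ − ψ_h| ≤ M γ̃_q ‖ψ‖_*` on `V_h`, then for all `w_h ∈ V_h`,
`|b(u − u_h, w_h)| ≤ M (γ_q ‖u − u_h‖ + γ_q ‖u‖ + γ̃_q ‖ψ‖_*) ‖w_h‖`. -/
theorem stmt_9 {H : Type*} [NormedAddCommGroup H] [InnerProductSpace ℂ H] [CompleteSpace H]
    (b bh : H →ₗ⋆[ℂ] H →ₗ[ℂ] ℂ) (M gammaq gammaqt : ℝ)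
    (hM : 0 ≤ M) (hgq : 0 ≤ gammaq) (hgqt : 0 ≤ gammaqt)
    (hcont : ∀ v w : H, ‖b v w‖ ≤ M * ‖v‖ * ‖w‖)
    (Vh : Submodule ℂ H) (u uh : H) (huh : uh ∈ Vh)
    (psi psih : StrongDual ℂ H)
    (hu : ∀ w : H, b u w = psi w)
    (huh' : ∀ wh ∈ Vh, bh uh wh = psih wh)
    (hq : ∀ vh ∈ Vh, ∀ wh ∈ Vh, ‖b vh wh - bh vh wh‖ ≤ M * gammaq * ‖vh‖ * ‖wh‖)
    (hrhs : ∀ wh ∈ Vh, ‖psi wh - psih wh‖ ≤ M * gammaqt * ‖psi‖ * ‖wh‖) :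
    ∀ wh ∈ Vh,
      ‖b (u - uh) wh‖ ≤ M * (gammaq * ‖u - uh‖ + gammaq * ‖u‖ + gammaqt * ‖psi‖) * ‖wh‖ := by
  intro wh hwh
  have key : b (u - uh) wh = (psi wh - psih wh) - (b uh wh - bh uh wh) := by
    simp only [map_sub, LinearMap.sub_apply, hu wh, huh' wh hwh]
    ring
  rw [key]
  have h1 := hrhs wh hwh
  have h2 := hq uh huh wh hwh
  have h3 : ‖uh‖ ≤ ‖u - uh‖ + ‖u‖ := by
    calc ‖uh‖ = ‖u - (u - uh)‖ := by rw [sub_sub_cancel]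
      _ ≤ ‖u‖ + ‖u - uh‖ := norm_sub_le _ _
      _ = ‖u - uh‖ + ‖u‖ := add_comm _ _
  calc ‖(psi wh - psih wh) - (b uh wh - bh uh wh)‖
      ≤ ‖psi wh - psih wh‖ + ‖b uh wh - bh uh wh‖ := norm_sub_le _ _
    _ ≤ M * gammaqt * ‖psi‖ * ‖wh‖ + M * gammaq * ‖uh‖ * ‖wh‖ := add_le_add h1 h2
    _ ≤ M * gammaqt * ‖psi‖ * ‖wh‖ + M * gammaq * (‖u - uh‖ + ‖u‖) * ‖wh‖ := by
        gcongr
    _ = M * (gammaq * ‖u - uh‖ + gammaq * ‖u‖ + gammaqt * ‖psi‖) * ‖wh‖ := by ring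
end

section
/- Let H be a complex Hilbert space with a self-adjoint bounded operator K : H → H, V_h ⊆ H a closed subspace, b⁺ : H × H → ℂ a sesquilinear form, continuous with constant M⁺ and coercive with constant C_coer > 0, π⁺_h : H → V_h the Galerkin projection with b⁺(v_h, (I−π⁺_h)w) = 0 for all v_h ∈ V_h, π_h the orthogonal projection onto V_h, S⁺ : H → H the solution operator defined by b⁺(S⁺φ, w) = ⟨φ, w⟩ for all w ∈ H, and k > 0. Set γ⁺_a := k‖(I − π_h)S⁺K‖ (operator norm H → H). Then for all v ∈ H: k‖K(I − π⁺_h)v‖ ≤ M⁺ γ⁺_a ‖(I − π⁺_h)v‖. -/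
open ContinuousLinearMap in
/-- Lemma `lem:abs2`: with `b⁺` continuous (`M⁺`) and coercive (`C_coer`), `π⁺_h` the
Galerkin projection onto the closed subspace `V_h`, `π_h` the orthogonal projection,
`S⁺` the solution operator of `b⁺`, and `γ⁺_a := k‖(I − π_h)S⁺K‖`, one has
`k‖K(I − π⁺_h)v‖ ≤ M⁺ γ⁺_a ‖(I − π⁺_h)v‖` for all `v ∈ H`. -/
theorem stmt_10 {H : Type*} [NormedAddCommGroup H] [InnerProductSpace ℂ H] [CompleteSpace H]
    (K : H →L[ℂ] H) (hK : IsSelfAdjoint K)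
    (Vh : Submodule ℂ H) [CompleteSpace Vh]
    (bp : H →ₗ⋆[ℂ] H →ₗ[ℂ] ℂ) (Mplus Ccoer k gammaA : ℝ)
    (hCcoer : 0 < Ccoer) (hk : 0 < k)
    (hcont : ∀ v w : H, ‖bp v w‖ ≤ Mplus * ‖v‖ * ‖w‖)
    (hcoer : ∀ v : H, Ccoer * ‖v‖ ^ 2 ≤ (bp v v).re)
    (piPh : H → H) (hmem : ∀ w : H, piPh w ∈ Vh)
    (hGal : ∀ w : H, ∀ vh ∈ Vh, bp vh (w - piPh w) = 0)
    (Splus : H →L[ℂ] H)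
    (hS : ∀ φ w : H, bp (Splus φ) w = (inner ℂ φ w : ℂ))
    (hgammaA : gammaA =
      k * ‖(ContinuousLinearMap.id ℂ H - (Vh.subtypeL.comp (Vh.orthogonalProjection))).comp
            (Splus.comp K)‖) :
    ∀ v : H, k * ‖K (v - piPh v)‖ ≤ Mplus * gammaA * ‖v - piPh v‖ := by
  intro v
  set T := (ContinuousLinearMap.id ℂ H - (Vh.subtypeL.comp (Vh.orthogonalProjection))).comp
      (Splus.comp K) with hT
  set e := v - piPh v with he
  by_cases hez : e = 0
  · rw [hez]
    simp
  set u := Splus (K (K e)) with hu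
  set Pu : H := (Vh.subtypeL (Vh.orthogonalProjection u)) with hPu
  have hTnorm : (0:ℝ) ≤ ‖T‖ := norm_nonneg _
  have hepos : 0 < ‖e‖ := norm_pos_iff.mpr hez
  have hM : 0 ≤ Mplus := by
    have h4 := hcont e e
    have h5 := hcoer e
    have h6 : (bp e e).re ≤ ‖bp e e‖ := by
      exact Complex.re_le_norm _
    nlinarith [mul_pos hepos hepos, mul_pos hCcoer (mul_pos hepos hepos), sq_abs ‖e‖]
  have h1 : bp Pu e = 0 := hGal v _ (Vh.coe_mem _)
  have h2 : bp (u - Pu) e = bp u e := by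
    simp [map_sub, h1]
  have h3 : bp u e = ((‖K e‖ : ℂ))^2 := by
    rw [hS]
    have hsym := hK.isSymmetric (K e) e
    simp only [ContinuousLinearMap.coe_coe] at hsym
    rw [hsym, @inner_self_eq_norm_sq_to_K ℂ]
    norm_cast
  have hkey : ‖K e‖^2 = ‖bp (u - Pu) e‖ := by
    rw [h2, h3, norm_pow, Complex.norm_real, norm_norm]
  have hTKe : u - Pu = T (K e) := by
    simp [hT, hu, hPu, ContinuousLinearMap.comp_apply, ContinuousLinearMap.sub_apply]
  have hub : ‖u - Pu‖ ≤ ‖T‖ * ‖K e‖ := by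
    rw [hTKe]; exact T.le_opNorm _
  have hchain : ‖K e‖^2 ≤ Mplus * (‖T‖ * ‖K e‖) * ‖e‖ := by
    rw [hkey]
    calc ‖bp (u - Pu) e‖ ≤ Mplus * ‖u - Pu‖ * ‖e‖ := hcont _ _
      _ ≤ Mplus * (‖T‖ * ‖K e‖) * ‖e‖ := by
          have := mul_le_mul_of_nonneg_right
            (mul_le_mul_of_nonneg_left hub hM) (norm_nonneg e)
          linarith
  rw [hgammaA]
  by_cases hKe : ‖K e‖ = 0
  · rw [hKe]
    have : 0 ≤ Mplus * (k * ‖T‖) * ‖e‖ := by positivity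
    linarith
  · have hKepos : 0 < ‖K e‖ := lt_of_le_of_ne (norm_nonneg _) (Ne.symm hKe)
    have : ‖K e‖ ≤ Mplus * ‖T‖ * ‖e‖ := by nlinarith
    nlinarith
end

section
/- Let H be a Hilbert space, b : H × H → ℂ sesquilinear, continuous with constant M, satisfying Re b(v,v) + 2k²‖Kv‖² ≥ C_coer‖v‖² for a bounded self-adjoint operator K and constants C_coer, k > 0. Let V_h ⊆ H be a closed subspace with orthogonal projection π_h, let u, u_h ∈ H with u_h ∈ V_h, set e := u − u_h, and suppose |b(e, w_h)| ≤ M(γ_q‖e‖ + γ_q‖u‖ + γ̃_q Ψ)‖w_h‖ for all w_h ∈ V_h, where γ_q, γ̃_q, Ψ ≥ 0. Then (C_coer − Mγ_q)‖e‖² ≤ M‖e‖(‖(I−π_h)u‖ + γ_q‖u‖ + γ̃_q Ψ) + 2k²‖Ke‖². -/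
/-- First step of the proof of Lemma `lem:abs1`: with a Gårding-type inequality for `b`
and quasi Galerkin orthogonality for the error `e := u − u_h`,
`(C_coer − Mγ_q)‖e‖² ≤ M‖e‖(‖(I−π_h)u‖ + γ_q‖u‖ + γ̃_q Ψ) + 2k²‖Ke‖²`. -/
theorem stmt_14 {H : Type*} [NormedAddCommGroup H] [InnerProductSpace ℂ H] [CompleteSpace H]
    (b : H →ₗ⋆[ℂ] H →ₗ[ℂ] ℂ) (M Ccoer k gammaq gammaqt Psi : ℝ)
    (hCcoer : 0 < Ccoer) (hk : 0 < k)
    (hgq : 0 ≤ gammaq) (hgqt : 0 ≤ gammaqt) (hPsi : 0 ≤ Psi)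
    (hcont : ∀ v w : H, ‖b v w‖ ≤ M * ‖v‖ * ‖w‖)
    (K : H →L[ℂ] H) (hK : IsSelfAdjoint K)
    (hGarding : ∀ v : H, Ccoer * ‖v‖ ^ 2 ≤ (b v v).re + 2 * k ^ 2 * ‖K v‖ ^ 2)
    (Vh : Submodule ℂ H) [CompleteSpace Vh]
    (u uh : H) (huh : uh ∈ Vh) (e : H) (he : e = u - uh)
    (hquasi : ∀ wh ∈ Vh,
      ‖b e wh‖ ≤ M * (gammaq * ‖e‖ + gammaq * ‖u‖ + gammaqt * Psi) * ‖wh‖) :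
    (Ccoer - M * gammaq) * ‖e‖ ^ 2 ≤
      M * ‖e‖ * (‖u - (Vh.orthogonalProjection u : H)‖ + gammaq * ‖u‖ + gammaqt * Psi)
        + 2 * k ^ 2 * ‖K e‖ ^ 2 := by
  rcases eq_or_ne e 0 with h0 | h0
  · simp [h0]
  have hE : 0 < ‖e‖ := norm_pos_iff.mpr h0
  have hM : 0 ≤ M := by
    have h1 := hcont e e
    have h2 : (0:ℝ) ≤ ‖b e e‖ := norm_nonneg _
    nlinarith [mul_pos hE hE]
  set P : H := (Vh.orthogonalProjection u : H) with hP
  have hPuh : ((Vh.orthogonalProjection uh : Vh) : H) = uh :=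
    Submodule.starProjection_eq_self_iff.mpr huh
  have hwh : ((Vh.orthogonalProjection e : Vh) : H) = P - uh := by
    rw [he, map_sub]
    push_cast [hPuh]
    rfl
  have hmem : P - uh ∈ Vh := Submodule.sub_mem _ (Vh.orthogonalProjection u).2 huh
  have hnorm : ‖P - uh‖ ≤ ‖e‖ := by
    rw [← hwh]
    calc ‖((Vh.orthogonalProjection e : Vh) : H)‖
        = ‖Vh.orthogonalProjection e‖ := rfl
      _ ≤ ‖Vh.orthogonalProjection‖ * ‖e‖ := (Vh.orthogonalProjection).le_opNorm e
      _ ≤ 1 * ‖e‖ := by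
          exact mul_le_mul_of_nonneg_right (Submodule.orthogonalProjectionOnto_norm_le Vh) (norm_nonneg e)
      _ = ‖e‖ := one_mul _
  have hsplit : b e e = b e (u - P) + b e (P - uh) := by
    rw [← map_add]
    congr 1
    rw [he]
    abel
  have h1 : ‖b e (u - P)‖ ≤ M * ‖e‖ * ‖u - P‖ := hcont e (u - P)
  have h2 : ‖b e (P - uh)‖ ≤ M * (gammaq * ‖e‖ + gammaq * ‖u‖ + gammaqt * Psi) * ‖P - uh‖ :=
    hquasi _ hmem
  have hre : (b e e).re ≤ ‖b e e‖ := Complex.re_le_norm _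
  have htri : ‖b e e‖ ≤ ‖b e (u - P)‖ + ‖b e (P - uh)‖ := by
    rw [hsplit]; exact norm_add_le _ _
  have hG := hGarding e
  have hfac : 0 ≤ M * (gammaq * ‖e‖ + gammaq * ‖u‖ + gammaqt * Psi) := by positivity
  have h2' : ‖b e (P - uh)‖ ≤ M * (gammaq * ‖e‖ + gammaq * ‖u‖ + gammaqt * Psi) * ‖e‖ :=
    h2.trans (mul_le_mul_of_nonneg_left hnorm hfac)
  nlinarith [norm_nonneg (b e (u - P)), norm_nonneg (b e (P - uh))]
end
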